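/- arXiv:2512.22692 — 6 statements merged into one kernel-verified Lean document; each statement's English description precedes it below -/
import Mathlib

section
/- If finitely many pairwise disjoint closed balls B̄_{p^{n_i}}(a_i), i = 1,…,m, in ℚ_p are all contained in a closed ball B̄_{p^n}(a), then ∑_{i=1}^m p^{n_i} ≤ p^n. -/
/-!
Balls of radius `p ^ k` in `ℚ_p` all have the same Haar measure, and a ball of radius `p ^ (k + 1)`
is the disjoint union of `p` balls of radius `p ^ k` (the cosets of `p ^ (-k) ℤ_p` in
`p ^ (-(k + 1)) ℤ_p`). Hence every Haar measure gives a ball of radius `p ^ k` the mass `p ^ k`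
times that of the unit ball, and the inequality is additivity and monotonicity of the measure.
-/

open MeasureTheory Metric Set

namespace Padic

variable {p : ℕ} [Fact p.Prime]

lemma exists_natCast_norm_sub_lt_one {x : ℚ_[p]} (hx : ‖x‖ ≤ 1) :
    ∃ r < p, ‖x - r‖ < 1 := by
  obtain ⟨r, hrp, hr⟩ := PadicInt.exists_mem_range ⟨x, hx⟩
  exact ⟨r, hrp, PadicInt.mem_nonunits.1 hr⟩

lemma closedBall_zpow_succ_eq_iUnion (k : ℤ) :
    closedBall (0 : ℚ_[p]) ((p : ℝ) ^ (k + 1)) =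
      ⋃ r : Fin p, closedBall ((r : ℚ_[p]) * (p : ℚ_[p]) ^ (-(k + 1))) ((p : ℝ) ^ k) := by
  have hp : (1 : ℝ) < p := mod_cast (Fact.out : p.Prime).one_lt
  have hpq : (p : ℚ_[p]) ≠ 0 := mod_cast (Fact.out : p.Prime).ne_zero
  refine Subset.antisymm (fun x hx => ?_) (iUnion_subset fun r => ?_)
  · rw [mem_closedBall_zero_iff] at hx
    have hy : ‖x * (p : ℚ_[p]) ^ (k + 1)‖ ≤ 1 := by
      rw [norm_mul, norm_p_zpow, ← zpow_neg_mul_zpow_self (k + 1) (by positivity : (p : ℝ) ≠ 0),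
        mul_comm]
      gcongr
    obtain ⟨r, hrp, hr⟩ := exists_natCast_norm_sub_lt_one hy
    have hx_sub : x - r * (p : ℚ_[p]) ^ (-(k + 1)) =
        (x * (p : ℚ_[p]) ^ (k + 1) - r) * (p : ℚ_[p]) ^ (-(k + 1)) := by
      rw [sub_mul, mul_assoc, ← zpow_add₀ hpq, add_neg_cancel, zpow_zero, mul_one]
    refine mem_iUnion.2 ⟨⟨r, hrp⟩, ?_⟩
    rw [mem_closedBall, dist_eq_norm, norm_le_pow_iff_norm_lt_pow_add_one, hx_sub, norm_mul,
      norm_p_zpow, neg_neg]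
    simpa using mul_lt_mul_of_pos_right hr (zpow_pos (by positivity) (k + 1))
  · have hc : (r : ℚ_[p]) * (p : ℚ_[p]) ^ (-(k + 1)) ∈ closedBall 0 ((p : ℝ) ^ (k + 1)) := by
      rw [mem_closedBall_zero_iff, norm_mul, norm_p_zpow, neg_neg]
      exact mul_le_of_le_one_left (by positivity) (IsUltrametricDist.norm_natCast_le_one _ r)
    rw [IsUltrametricDist.closedBall_eq_of_mem hc]
    exact closedBall_subset_closedBall (zpow_le_zpow_right₀ hp.le (by omega))

lemma pairwise_disjoint_closedBall_natCast_mul_zpow (k : ℤ) :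
    Pairwise (Function.onFun Disjoint
      fun r : Fin p => closedBall ((r : ℚ_[p]) * (p : ℚ_[p]) ^ (-(k + 1))) ((p : ℝ) ^ k)) := by
  intro r s hrs
  refine Set.disjoint_left.2 fun x hxr hxs => hrs ?_
  have hdist := (IsUltrametricDist.dist_triangle_max _ x _).trans
    (max_le (mem_closedBall'.1 hxr) (mem_closedBall.1 hxs))
  have hdiff : (r : ℚ_[p]) * (p : ℚ_[p]) ^ (-(k + 1)) - s * (p : ℚ_[p]) ^ (-(k + 1)) =
      (((r : ℤ) - s : ℤ) : ℚ_[p]) * (p : ℚ_[p]) ^ (-(k + 1)) := by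
    push_cast; ring
  rw [dist_eq_norm, hdiff, norm_le_pow_iff_norm_lt_pow_add_one, norm_mul, norm_p_zpow, neg_neg,
    mul_lt_iff_lt_one_left (zpow_pos (Nat.cast_pos.2 (Fact.out : p.Prime).pos) _),
    norm_intCast_lt_one_iff] at hdist
  have := Int.eq_zero_of_abs_lt_dvd hdist (by rw [abs_lt]; omega)
  omega

noncomputable instance : MeasurableSpace ℚ_[p] := borel _

instance : BorelSpace ℚ_[p] := ⟨rfl⟩

variable (μ : Measure ℚ_[p]) [μ.IsAddHaarMeasure]

lemma addHaar_closedBall_zpow_succ (k : ℤ) :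
    μ (closedBall 0 ((p : ℝ) ^ (k + 1))) = p * μ (closedBall 0 ((p : ℝ) ^ k)) := by
  rw [closedBall_zpow_succ_eq_iUnion,
    measure_iUnion (pairwise_disjoint_closedBall_natCast_mul_zpow k)
      fun _ => measurableSet_closedBall, tsum_fintype]
  simp [Measure.addHaar_closedBall_center]

lemma addHaar_closedBall_zpow (c : ℚ_[p]) (k : ℤ) :
    μ (closedBall c ((p : ℝ) ^ k)) = ENNReal.ofReal ((p : ℝ) ^ k) * μ (closedBall 0 1) := by
  have hp : (0 : ℝ) < p := Nat.cast_pos.2 (Fact.out : p.Prime).pos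
  have hp_ne_zero : (p : ENNReal) ≠ 0 := Nat.cast_ne_zero.2 (Fact.out : p.Prime).ne_zero
  have ofReal_zpow_succ (j : ℤ) :
      ENNReal.ofReal ((p : ℝ) ^ (j + 1)) = p * ENNReal.ofReal ((p : ℝ) ^ j) := by
    rw [zpow_add_one₀ hp.ne', ENNReal.ofReal_mul (zpow_nonneg hp.le j), mul_comm,
      ENNReal.ofReal_natCast]
  rw [Measure.addHaar_closedBall_center]
  induction k using Int.induction_on with
  | zero => simp
  | succ k ih => rw [addHaar_closedBall_zpow_succ, ih, ofReal_zpow_succ, mul_assoc]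
  | pred k ih =>
    rw [← ENNReal.mul_right_inj hp_ne_zero (ENNReal.natCast_ne_top p), ← mul_assoc,
      ← ofReal_zpow_succ, ← addHaar_closedBall_zpow_succ, sub_add_cancel, ih]

end Padic

theorem padic_disjoint_balls_radii_sum {p : ℕ} [Fact p.Prime] {m : ℕ}
    (a : Fin m → ℚ_[p]) (nn : Fin m → ℤ) (a₀ : ℚ_[p]) (n : ℤ)
    (hdisj : ∀ i j : Fin m, i ≠ j →
      Disjoint (Metric.closedBall (a i) ((p : ℝ) ^ (nn i)))
        (Metric.closedBall (a j) ((p : ℝ) ^ (nn j))))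
    (hsub : ∀ i : Fin m,
      Metric.closedBall (a i) ((p : ℝ) ^ (nn i)) ⊆ Metric.closedBall a₀ ((p : ℝ) ^ n)) :
    ∑ i : Fin m, (p : ℝ) ^ (nn i) ≤ (p : ℝ) ^ n := by
  have hp : (0 : ℝ) < p := Nat.cast_pos.2 (Fact.out : p.Prime).pos
  let μ : Measure ℚ_[p] := Measure.addHaar
  have hunit_pos : μ (closedBall 0 1) ≠ 0 := (measure_closedBall_pos μ 0 one_pos).ne'
  have hunit_fin : μ (closedBall 0 1) ≠ ⊤ := (isCompact_closedBall 0 1).measure_lt_top.ne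
  have hmeasure :
      ∑ i, μ (closedBall (a i) ((p : ℝ) ^ (nn i))) ≤ μ (closedBall a₀ ((p : ℝ) ^ n)) :=
    calc ∑ i, μ (closedBall (a i) ((p : ℝ) ^ (nn i)))
        = μ (⋃ i, closedBall (a i) ((p : ℝ) ^ (nn i))) := by
          rw [measure_iUnion (fun i j h => hdisj i j h) fun _ => measurableSet_closedBall,
            tsum_fintype]
      _ ≤ μ (closedBall a₀ ((p : ℝ) ^ n)) := measure_mono (iUnion_subset hsub)
  simp only [Padic.addHaar_closedBall_zpow, ← Finset.sum_mul,
    ENNReal.mul_le_mul_iff_left hunit_pos hunit_fin] at hmeasure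
  rwa [← ENNReal.ofReal_sum_of_nonneg (fun i _ => (zpow_pos hp _).le),
    ENNReal.ofReal_le_ofReal_iff (zpow_pos hp _).le] at hmeasure
end

section
/- Under the setup of the previous statement, if moreover there are points x_{m+1}, …, x_n ∈ ℚ_p such that some pair (w, b) ∈ ℚ_p × ℚ_p satisfies |w·x_k + b|_p ≤ 1 for k ≤ m and |w·x_k + b|_p > 1 for k > m, then w* = 1/(x_j - x_i), b* = -x_i/(x_j - x_i) also satisfy |w*·x_k + b*|_p > 1 for all k > m. -/
theorem padic_separating_classifier {p : ℕ} [Fact p.Prime] {m l : ℕ}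
    (xp : Fin m → ℚ_[p]) (xn : Fin l → ℚ_[p]) (hm : 2 ≤ m) (i j : Fin m)
    (hj : ∀ k : Fin m, ‖xp k - xp i‖ ≤ ‖xp j - xp i‖)
    (hne : xp j ≠ xp i)
    (hsep : ∃ w b : ℚ_[p], (∀ k : Fin m, ‖w * xp k + b‖ ≤ 1) ∧
      (∀ k : Fin l, 1 < ‖w * xn k + b‖)) :
    ∀ k : Fin l, 1 < ‖(1 / (xp j - xp i)) * xn k + (-(xp i) / (xp j - xp i))‖ := by
  obtain ⟨w, b, hpos, hneg⟩ := hsep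
  intro k
  have hd : xp j - xp i ≠ 0 := sub_ne_zero.mpr hne
  have hdn : (0:ℝ) < ‖xp j - xp i‖ := norm_pos_iff.mpr hd
  -- ‖w (xp j - xp i)‖ ≤ 1
  have hB : ‖w * (xp j - xp i)‖ ≤ 1 := by
    have : w * (xp j - xp i) = (w * xp j + b) + -(w * xp i + b) := by ring
    rw [this]
    calc ‖(w * xp j + b) + -(w * xp i + b)‖
        ≤ max ‖w * xp j + b‖ ‖-(w * xp i + b)‖ := Padic.nonarchimedean _ _
      _ ≤ 1 := by rw [norm_neg]; exact max_le (hpos j) (hpos i)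
  -- 1 < ‖w (xn k - xp i)‖
  have hA : 1 < ‖w * (xn k - xp i)‖ := by
    have h1 : 1 < ‖w * xn k + b‖ := hneg k
    have h2 : ‖w * xn k + b‖ ≤ max ‖w * (xn k - xp i)‖ ‖w * xp i + b‖ := by
      have : w * xn k + b = w * (xn k - xp i) + (w * xp i + b) := by ring
      rw [this]; exact Padic.nonarchimedean _ _
    rcases le_max_iff.mp h2 with h | h
    · exact lt_of_lt_of_le h1 h
    · exact absurd (lt_of_lt_of_le h1 h) (not_lt.mpr (hpos i))
  have hAB : ‖w * (xp j - xp i)‖ < ‖w * (xn k - xp i)‖ := lt_of_le_of_lt hB hA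
  rw [norm_mul, norm_mul] at hAB
  have hw : w ≠ 0 := by
    rintro rfl
    simp at hAB
  have hwn : (0:ℝ) < ‖w‖ := norm_pos_iff.mpr hw
  have hlt : ‖xp j - xp i‖ < ‖xn k - xp i‖ := lt_of_mul_lt_mul_left hAB (le_of_lt hwn)
  have heq : (1 / (xp j - xp i)) * xn k + (-(xp i) / (xp j - xp i))
      = (xn k - xp i) / (xp j - xp i) := by field_simp; ring
  rw [heq, norm_div]
  exact (one_lt_div hdn).mpr hlt
end

section
/- (Second-order p-adic classifier, disjoint case) Let f(x) = c(x - a_1)(x - a_2) with c ≠ 0, |a_1 - a_2|_p = p^{-k12}, |c|_p = p^k, and k > 2·k12. Then |f(x)|_p ≤ 1 if and only if x ∈ B̄_{p^{-k+k12}}(a_1) ∪ B̄_{p^{-k+k12}}(a_2), and these two balls are disjoint. -/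
theorem padic_second_order_classifier_disjoint {p : ℕ} [Fact p.Prime]
    (c a₁ a₂ : ℚ_[p]) (hc : c ≠ 0) (ha : a₁ ≠ a₂) (k k12 : ℤ)
    (h12 : ‖a₁ - a₂‖ = (p : ℝ) ^ (-k12))
    (hk : ‖c‖ = (p : ℝ) ^ k)
    (hgt : 2 * k12 < k) :
    (∀ x : ℚ_[p], ‖c * (x - a₁) * (x - a₂)‖ ≤ 1 ↔
        x ∈ Metric.closedBall a₁ ((p : ℝ) ^ (-k + k12)) ∪
          Metric.closedBall a₂ ((p : ℝ) ^ (-k + k12))) ∧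
      Disjoint (Metric.closedBall a₁ ((p : ℝ) ^ (-k + k12)))
        (Metric.closedBall a₂ ((p : ℝ) ^ (-k + k12))) := by
  have hprime : p.Prime := Fact.out
  have hp1 : (1:ℝ) < p := by exact_mod_cast hprime.one_lt
  have hp0 : (0:ℝ) < p := by linarith
  have hpne : (p:ℝ) ≠ 0 := ne_of_gt hp0
  set r : ℝ := (p:ℝ)^(-k+k12) with hr
  set A : ℝ := (p:ℝ)^k with hA
  set B : ℝ := (p:ℝ)^(-k12) with hB
  have hrpos : 0 < r := zpow_pos hp0 _
  have hApos : 0 < A := zpow_pos hp0 _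
  have hBpos : 0 < B := zpow_pos hp0 _
  have hrlt : r < B := by
    apply zpow_lt_zpow_right₀ hp1; linarith
  have key : A * r * B = 1 := by
    rw [hr, hA, hB, ← zpow_add₀ hpne, ← zpow_add₀ hpne]
    norm_num
  have ultra : ∀ x y z : ℚ_[p], ‖x - z‖ ≤ max ‖x - y‖ ‖y - z‖ := by
    intro x y z
    have hxyz : x - z = (x - y) + (y - z) := by ring
    rw [hxyz]
    exact Padic.nonarchimedean _ _
  constructor
  · intro x
    have hu0 : (0:ℝ) ≤ ‖x - a₁‖ := norm_nonneg _
    have hv0 : (0:ℝ) ≤ ‖x - a₂‖ := norm_nonneg _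
    set u := ‖x - a₁‖ with hu
    set v := ‖x - a₂‖ with hv
    have hnorm : ‖c * (x - a₁) * (x - a₂)‖ = A * u * v := by
      rw [norm_mul, norm_mul, hk]
    rw [hnorm]
    simp only [Set.mem_union, Metric.mem_closedBall, dist_eq_norm]
    constructor
    · intro h
      rcases le_total u v with huv | huv
      · left
        have hBv : B ≤ v := by
          have h2 := ultra a₁ x a₂
          rw [h12, norm_sub_rev a₁ x] at h2
          exact h2.trans (max_le huv le_rfl)
        have h1 : A * u * B ≤ A * u * v :=
          mul_le_mul_of_nonneg_left hBv (mul_nonneg hApos.le hu0)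
        have h2 : (A * B) * u ≤ (A * B) * r := by nlinarith
        exact le_of_mul_le_mul_left h2 (mul_pos hApos hBpos)
      · right
        have hBu : B ≤ u := by
          have h2 := ultra a₂ x a₁
          rw [norm_sub_rev a₂ a₁, h12, norm_sub_rev a₂ x] at h2
          exact h2.trans (max_le huv le_rfl)
        have h1 : A * v * B ≤ A * v * u :=
          mul_le_mul_of_nonneg_left hBu (mul_nonneg hApos.le hv0)
        have h2 : (A * B) * v ≤ (A * B) * r := by nlinarith
        exact le_of_mul_le_mul_left h2 (mul_pos hApos hBpos)
    · intro h
      rcases h with h | h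
      · have hvB : v ≤ B := by
          have h2 := ultra x a₁ a₂
          rw [h12] at h2
          exact h2.trans (max_le (h.trans hrlt.le) le_rfl)
        have hur : u ≤ r := h
        have h1 : u * v ≤ r * B := mul_le_mul hur hvB hv0 hrpos.le
        have h2 : A * (u * v) ≤ A * (r * B) := mul_le_mul_of_nonneg_left h1 hApos.le
        nlinarith
      · have huB : u ≤ B := by
          have h2 := ultra x a₂ a₁
          rw [norm_sub_rev a₂ a₁, h12] at h2
          exact h2.trans (max_le (h.trans hrlt.le) le_rfl)
        have hvr : v ≤ r := h
        have h1 : u * v ≤ B * r := mul_le_mul huB hvr hv0 hBpos.le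
        have h2 : A * (u * v) ≤ A * (B * r) := mul_le_mul_of_nonneg_left h1 hApos.le
        nlinarith
  · rw [Set.disjoint_left]
    intro x hx1 hx2
    rw [Metric.mem_closedBall, dist_eq_norm] at hx1 hx2
    have h2 := ultra a₁ x a₂
    rw [h12, norm_sub_rev a₁ x] at h2
    have : B ≤ r := h2.trans (max_le hx1 hx2)
    linarith
end

section
/- (Second-order p-adic classifier, degenerate case) Let f(x) = c(x - a_1)(x - a_2) with c ≠ 0, |a_1 - a_2|_p = p^{-k12}, |c|_p = p^k, and k ≤ 2·k12. Then |f(x)|_p ≤ 1 if and only if x ∈ B̄_{p^{-⌈k/2⌉}}(a_1), and moreover B̄_{p^{-⌈k/2⌉}}(a_1) = B̄_{p^{-⌈k/2⌉}}(a_2). -/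
theorem padic_second_order_classifier_single_ball {p : ℕ} [Fact p.Prime]
    (c a₁ a₂ : ℚ_[p]) (hc : c ≠ 0) (ha : a₁ ≠ a₂) (k k12 : ℤ)
    (h12 : ‖a₁ - a₂‖ = (p : ℝ) ^ (-k12))
    (hk : ‖c‖ = (p : ℝ) ^ k)
    (hle : k ≤ 2 * k12) :
    (∀ x : ℚ_[p], ‖c * (x - a₁) * (x - a₂)‖ ≤ 1 ↔
        x ∈ Metric.closedBall a₁ ((p : ℝ) ^ (-⌈(k : ℚ) / 2⌉))) ∧
      Metric.closedBall a₁ ((p : ℝ) ^ (-⌈(k : ℚ) / 2⌉)) =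
        Metric.closedBall a₂ ((p : ℝ) ^ (-⌈(k : ℚ) / 2⌉)) := by
  have hp1 : (1 : ℝ) < (p : ℝ) := by exact_mod_cast (Fact.out : p.Prime).one_lt
  have hp0 : (0 : ℝ) < (p : ℝ) := lt_trans one_pos hp1
  set m : ℤ := ⌈(k : ℚ) / 2⌉ with hm
  have h1 : (k : ℚ) / 2 ≤ (m : ℚ) := Int.le_ceil _
  have h2 : (m : ℚ) < (k : ℚ) / 2 + 1 := Int.ceil_lt_add_one _
  have hk2m : k ≤ 2 * m := by
    have : (k : ℚ) ≤ 2 * m := by linarith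
    exact_mod_cast this
  have h2mk : 2 * m ≤ k + 1 := by
    have : (2 : ℚ) * m < k + 2 := by linarith
    have : (2 * m : ℤ) < k + 2 := by exact_mod_cast this
    omega
  have hmk12 : m ≤ k12 := by
    have : (k : ℚ) / 2 ≤ (k12 : ℚ) := by
      have : (k : ℚ) ≤ 2 * k12 := by exact_mod_cast hle
      linarith
    exact hm ▸ Int.ceil_le.mpr this
  have h12le : ‖a₁ - a₂‖ ≤ (p : ℝ) ^ (-m) := by
    rw [h12]
    exact zpow_le_zpow_right₀ hp1.le (by omega)
  -- balls are equal
  have hball : Metric.closedBall a₁ ((p : ℝ) ^ (-m)) =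
      Metric.closedBall a₂ ((p : ℝ) ^ (-m)) := by
    ext y
    simp only [Metric.mem_closedBall, dist_eq_norm]
    constructor
    · intro h
      calc ‖y - a₂‖ = ‖(y - a₁) + (a₁ - a₂)‖ := by ring_nf
        _ ≤ max ‖y - a₁‖ ‖a₁ - a₂‖ := Padic.nonarchimedean _ _
        _ ≤ (p : ℝ) ^ (-m) := max_le h h12le
    · intro h
      calc ‖y - a₁‖ = ‖(y - a₂) + (a₂ - a₁)‖ := by ring_nf
        _ ≤ max ‖y - a₂‖ ‖a₂ - a₁‖ := Padic.nonarchimedean _ _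
        _ ≤ (p : ℝ) ^ (-m) := max_le h (by rwa [norm_sub_rev])
  refine ⟨fun x => ?_, hball⟩
  simp only [Metric.mem_closedBall, dist_eq_norm]
  rcases eq_or_ne x a₁ with rfl | hxa
  · simp only [sub_self, mul_zero, zero_mul, norm_zero]
    constructor
    · intro _
      positivity
    · intro _; exact zero_le_one
  · have hx1 : x - a₁ ≠ 0 := sub_ne_zero.mpr hxa
    have hv : ‖x - a₁‖ = (p : ℝ) ^ (-(x - a₁).valuation) := Padic.norm_eq_zpow_neg_valuation hx1
    set v : ℤ := (x - a₁).valuation with hvdef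
    constructor
    · intro h
      by_contra hgt
      push_neg at hgt
      rw [hv] at hgt
      have hvm : v ≤ m - 1 := by
        by_contra hh
        push_neg at hh
        exact absurd (zpow_le_zpow_right₀ hp1.le (by omega : -v ≤ -m)) (not_le.mpr hgt)
      -- ‖x - a₁‖ > ‖a₁ - a₂‖
      have hlt : ‖a₁ - a₂‖ < ‖x - a₁‖ := by
        rw [h12, hv]
        exact zpow_lt_zpow_right₀ hp1 (by omega)
      have hx2 : ‖x - a₂‖ = ‖x - a₁‖ := by
        have hne : ‖x - a₁‖ ≠ ‖a₁ - a₂‖ := ne_of_gt hlt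
        calc ‖x - a₂‖ = ‖(x - a₁) + (a₁ - a₂)‖ := by ring_nf
          _ = max ‖x - a₁‖ ‖a₁ - a₂‖ := Padic.add_eq_max_of_ne hne
          _ = ‖x - a₁‖ := max_eq_left hlt.le
      have : ‖c * (x - a₁) * (x - a₂)‖ = (p : ℝ) ^ (k + -v + -v) := by
        rw [norm_mul, norm_mul, hk, hx2, hv, ← zpow_add₀ (ne_of_gt hp0),
          ← zpow_add₀ (ne_of_gt hp0)]
      rw [this] at h
      have : (1 : ℝ) < (p : ℝ) ^ (k + -v + -v) := by
        calc (1 : ℝ) = (p : ℝ) ^ (0 : ℤ) := (zpow_zero _).symm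
          _ < (p : ℝ) ^ (k + -v + -v) := zpow_lt_zpow_right₀ hp1 (by omega)
      linarith
    · intro h
      have h2' : ‖x - a₂‖ ≤ (p : ℝ) ^ (-m) := by
        calc ‖x - a₂‖ = ‖(x - a₁) + (a₁ - a₂)‖ := by ring_nf
          _ ≤ max ‖x - a₁‖ ‖a₁ - a₂‖ := Padic.nonarchimedean _ _
          _ ≤ (p : ℝ) ^ (-m) := max_le h h12le
      calc ‖c * (x - a₁) * (x - a₂)‖ = ‖c‖ * ‖x - a₁‖ * ‖x - a₂‖ := by
            rw [norm_mul, norm_mul]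
        _ ≤ (p : ℝ) ^ k * (p : ℝ) ^ (-m) * (p : ℝ) ^ (-m) := by
            rw [hk]
            have hn1 : (0:ℝ) ≤ ‖x - a₁‖ := norm_nonneg _
            have hn2 : (0:ℝ) ≤ ‖x - a₂‖ := norm_nonneg _
            have hpk : (0:ℝ) ≤ (p:ℝ) ^ k := le_of_lt (zpow_pos hp0 _)
            have hpm : (0:ℝ) ≤ (p:ℝ) ^ (-m) := le_of_lt (zpow_pos hp0 _)
            gcongr
        _ = (p : ℝ) ^ (k + -m + -m) := by
            rw [← zpow_add₀ (ne_of_gt hp0), ← zpow_add₀ (ne_of_gt hp0)]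
        _ ≤ (p : ℝ) ^ (0 : ℤ) := zpow_le_zpow_right₀ hp1.le (by omega)
        _ = 1 := zpow_zero _
end

section
/- A two-input p-adic linear classifier computes XOR: with w_1 = w_2 = 1/p and b = -1/p, for all (x_1, x_2) ∈ {0,1}², we have |w_1·x_1 + w_2·x_2 + b|_p ≤ 1 if and only if x_1 ≠ x_2. -/
theorem padic_linear_classifier_xor {p : ℕ} [Fact p.Prime] :
    ∀ x₁ x₂ : ℚ_[p], (x₁ = 0 ∨ x₁ = 1) → (x₂ = 0 ∨ x₂ = 1) →
      (‖(1 / (p : ℚ_[p])) * x₁ + (1 / (p : ℚ_[p])) * x₂ + (-(1 / (p : ℚ_[p])))‖ ≤ 1 ↔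
        x₁ ≠ x₂) := by
  have hp : (p : ℝ) ≥ 2 := by exact_mod_cast (Fact.out : p.Prime).two_le
  have hp0 : (p : ℚ_[p]) ≠ 0 := by
    exact_mod_cast (Nat.cast_ne_zero (R := ℚ_[p])).mpr (Fact.out : p.Prime).ne_zero
  have hnorm : ‖(1 / (p : ℚ_[p]))‖ = (p : ℝ) := by
    rw [norm_div, norm_one, Padic.norm_p, one_div, inv_inv]
  have hgt : ¬ ((p : ℝ) ≤ 1) := by linarith
  rintro x₁ x₂ (rfl | rfl) (rfl | rfl) <;>
    simp only [mul_zero, mul_one, zero_add, add_zero, add_neg_cancel, norm_zero, norm_neg]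
  · rw [hnorm]; simpa using hgt
  · simp
  · simp
  · rw [show (1 / (p : ℚ_[p])) + (1 / (p : ℚ_[p])) + (-(1 / (p : ℚ_[p]))) = 1 / (p : ℚ_[p]) by ring,
      hnorm]
    simpa using hgt
end

section
/- No p-adic linear classifier solves count thresholding: for d ≥ 2 and c ∈ {1,…,d-1}, there is no (w, b) ∈ ℚ_p^d × ℚ_p such that for all x ∈ {0,1}^d, |∑_i w_i·x_i + b|_p ≤ 1 holds if and only if ∑_i x_i ≤ c. -/
theorem padic_no_count_thresholding {p : ℕ} [Fact p.Prime]
    (d c : ℕ) (hd : 2 ≤ d) (hc1 : 1 ≤ c) (hcd : c ≤ d - 1) :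
    ¬ ∃ (w : Fin d → ℚ_[p]) (b : ℚ_[p]),
        ∀ x : Fin d → ℕ, (∀ i, x i ≤ 1) →
          (‖(∑ i : Fin d, w i * (x i : ℚ_[p])) + b‖ ≤ 1 ↔ (∑ i : Fin d, x i) ≤ c) := by
  rintro ⟨w, b, h⟩
  have hcd' : c < d := lt_of_le_of_lt hcd (Nat.sub_lt (by omega) one_pos)
  set j : Fin d := ⟨c, hcd'⟩ with hj
  set x : Fin d → ℕ := fun i => if i.val < c then 1 else 0 with hx
  set y : Fin d → ℕ := fun i => if i.val < c + 1 then 1 else 0 with hy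
  set e : Fin d → ℕ := fun i => if i = j then 1 else 0 with he
  set z : Fin d → ℕ := fun _ => 0 with hz
  have hxb : ∀ i, x i ≤ 1 := fun i => by simp [hx]; split <;> omega
  have hyb : ∀ i, y i ≤ 1 := fun i => by simp [hy]; split <;> omega
  have heb : ∀ i, e i ≤ 1 := fun i => by simp [he]; split <;> omega
  have hzb : ∀ i, z i ≤ 1 := fun i => by simp [hz]
  -- sums
  have hsum : ∀ m : ℕ, m ≤ d → (∑ i : Fin d, (if i.val < m then 1 else 0)) = m := by
    intro m hm
    rw [Fin.sum_univ_eq_sum_range (fun i => if i < m then 1 else 0) d]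
    rw [← Finset.sum_subset (Finset.range_subset_range.mpr hm)
      (fun i _ hi => by simp_all [Finset.mem_range])]
    rw [Finset.sum_congr rfl (fun i hi => if_pos (Finset.mem_range.mp hi))]
    simp
  have hsx : (∑ i : Fin d, x i) = c := hsum c (by omega)
  have hsy : (∑ i : Fin d, y i) = c + 1 := hsum (c + 1) (by omega)
  have hse : (∑ i : Fin d, e i) = 1 := by simp [he]
  have hsz : (∑ i : Fin d, z i) = 0 := by simp [hz]
  -- members of the ball
  have hX : ‖(∑ i : Fin d, w i * (x i : ℚ_[p])) + b‖ ≤ 1 :=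
    (h x hxb).mpr (by rw [hsx])
  have hE : ‖(∑ i : Fin d, w i * (e i : ℚ_[p])) + b‖ ≤ 1 :=
    (h e heb).mpr (by rw [hse]; omega)
  have hB : ‖b‖ ≤ 1 := by
    have := (h z hzb).mpr (by rw [hsz]; omega)
    simpa [hz] using this
  -- decomposition y = x + e
  have hdec : (∑ i : Fin d, w i * (y i : ℚ_[p]))
      = (∑ i : Fin d, w i * (x i : ℚ_[p])) + (∑ i : Fin d, w i * (e i : ℚ_[p])) := by
    rw [← Finset.sum_add_distrib]
    apply Finset.sum_congr rfl
    intro i _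
    have : (y i : ℚ_[p]) = (x i : ℚ_[p]) + (e i : ℚ_[p]) := by
      have : y i = x i + e i := by
        simp only [hx, hy, he]
        rcases eq_or_ne i j with rfl | hne
        · simp [hj]
        · have hne' : i.val ≠ c := fun hvc => hne (Fin.ext hvc)
          by_cases hlt : i.val < c
          · simp [hlt, Nat.lt_succ_of_lt hlt, hne]
          · have : ¬ i.val < c + 1 := by omega
            simp [hlt, this, hne]
      exact_mod_cast congrArg (Nat.cast : ℕ → ℚ_[p]) this
    rw [this]; ring
  -- contradiction via ultrametric
  have key : ‖(∑ i : Fin d, w i * (y i : ℚ_[p])) + b‖ ≤ 1 := by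
    have heq : (∑ i : Fin d, w i * (y i : ℚ_[p])) + b
        = (((∑ i : Fin d, w i * (x i : ℚ_[p])) + b)
          + ((∑ i : Fin d, w i * (e i : ℚ_[p])) + b)) + (-b) := by
      rw [hdec]; ring
    rw [heq]
    refine le_trans (Padic.nonarchimedean _ _) (max_le ?_ (by simpa using hB))
    exact le_trans (Padic.nonarchimedean _ _) (max_le hX hE)
  have := (h y hyb).mp key
  omega
end
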